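/- For any Lie element f ∈ Lie(X) ⊆ k⟨X⟩ (a nonzero element of the Lie subalgebra generated by X under the commutator bracket), the leading word of f with respect to the deg-lex order on X* is an associative Lyndon-Shirshov word. -/

import Mathlib

open List

/-- The lexicographic order used by Shirshov: a word is *greater* than any of its
proper extensions (`w > w ++ t` for `t ≠ []`), and otherwise words are compared
letterwise by the order on the alphabet.  `LSLt u v` means `u < v`. -/
def LSLt {X : Type*} [LinearOrder X] : List X → List X → Prop
  | _ :: _, [] => True
  | [], _ => False
  | a :: u, b :: v => a < b ∨ (a = b ∧ LSLt u v)

/-- `u ≤ v` in the Shirshov lexicographic order. -/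
def LSLe {X : Type*} [LinearOrder X] (u v : List X) : Prop := u = v ∨ LSLt u v

/-- The degree-lexicographic order: compare first by length, then lexicographically. -/
def DegLt {X : Type*} [LinearOrder X] (u v : List X) : Prop :=
  u.length < v.length ∨ (u.length = v.length ∧ LSLt u v)

/-- `≤` in the degree-lexicographic order. -/
def DegLe {X : Type*} [LinearOrder X] (u v : List X) : Prop := u = v ∨ DegLt u v

/-- An associative Lyndon–Shirshov word: a nonempty word `u` such that `vw > wv`
(lexicographically) for every factorization `u = vw` into nonempty parts. -/
def IsALSW {X : Type*} [LinearOrder X] (u : List X) : Prop :=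
  u ≠ [] ∧ ∀ v w : List X, v ≠ [] → w ≠ [] → u = v ++ w → LSLt (w ++ v) (v ++ w)

/-- The underlying associative word of a non-associative word (binary bracketing). -/
def wordOf {X : Type*} : FreeMagma X → List X
  | .of x => [x]
  | .mul a b => wordOf a ++ wordOf b

/-- `w` is the longest proper suffix of `u` which is an ALSW. -/
def LongestALSWProperSuffix {X : Type*} [LinearOrder X] (u w : List X) : Prop :=
  IsALSW w ∧ (∃ v : List X, v ≠ [] ∧ u = v ++ w) ∧
    ∀ w' : List X, IsALSW w' → (∃ v' : List X, v' ≠ [] ∧ u = v' ++ w') →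
      w'.length ≤ w.length

/-- The standard (up-to-down) bracketing of an ALSW: `[x] = x` and
`[u] = [[v][w]]` where `w` is the longest proper ALSW suffix of `u`. -/
inductive IsStdBracketing {X : Type*} [LinearOrder X] : List X → FreeMagma X → Prop
  | of (x : X) : IsStdBracketing [x] (.of x)
  | mul {v w : List X} {tv tw : FreeMagma X} :
      IsALSW (v ++ w) → LongestALSWProperSuffix (v ++ w) w →
      IsStdBracketing v tv → IsStdBracketing w tw →
      IsStdBracketing (v ++ w) (tv * tw)

/-- A non-associative Lyndon–Shirshov word, via Shirshov's conditions:
the underlying word is an ALSW, both halves are NLSWs, and the right factor of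
the left half is `≤` the right half. -/
inductive IsNLSW {X : Type*} [LinearOrder X] : FreeMagma X → Prop
  | of (x : X) : IsNLSW (.of x)
  | mul {tv tw : FreeMagma X} :
      IsNLSW tv → IsNLSW tw → IsALSW (wordOf (tv * tw)) →
      (∀ t₁ t₂ : FreeMagma X, tv = t₁ * t₂ → LSLe (wordOf t₂) (wordOf tw)) →
      IsNLSW (tv * tw)

/-- The free associative algebra `k⟨X⟩`, realized as the monoid algebra of the
free monoid on `X`. -/
abbrev FreeAssocAlg (k X : Type*) [Field k] := MonoidAlgebra k (FreeMonoid X)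

/-- The monomial of `k⟨X⟩` corresponding to a word `u ∈ X*`. -/
noncomputable def monom (k : Type*) [Field k] {X : Type*} (u : List X) : FreeAssocAlg k X :=
  MonoidAlgebra.single (FreeMonoid.ofList u) 1

/-- The coefficient of the word `u` in `f ∈ k⟨X⟩`. -/
def coeffW {k X : Type*} [Field k] (f : FreeAssocAlg k X) (u : List X) : k :=
  f.coeff (FreeMonoid.ofList u)

/-- `u` is the leading word of `f` with respect to the deg-lex order. -/
def IsLeadingWord {k X : Type*} [Field k] [LinearOrder X]
    (f : FreeAssocAlg k X) (u : List X) : Prop :=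
  coeffW f u ≠ 0 ∧ ∀ w : List X, coeffW f w ≠ 0 → w = u ∨ DegLt w u

/-- `f` is monic: its leading coefficient is `1`. -/
def IsMonic {k X : Type*} [Field k] [LinearOrder X] (f : FreeAssocAlg k X) : Prop :=
  ∃ u : List X, IsLeadingWord f u ∧ coeffW f u = 1

/-- The generator `x ∈ X` inside `k⟨X⟩`. -/
noncomputable def gen (k : Type*) [Field k] {X : Type*} (x : X) : FreeAssocAlg k X :=
  monom k [x]

attribute [local instance] LieRing.ofAssociativeRing

/-- The free Lie algebra `Lie(X)`: the Lie subalgebra of `k⟨X⟩` generated by `X`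
under the commutator bracket. -/
noncomputable def LieX (k X : Type*) [Field k] : LieSubalgebra k (FreeAssocAlg k X) :=
  LieSubalgebra.lieSpan k _ (Set.range (gen k (X := X)))

/-- Evaluation of a non-associative word in `k⟨X⟩`, interpreting the binary
operation as the commutator `(ab) = ab - ba`. -/
noncomputable def evalC {k X : Type*} [Field k] : FreeMagma X → FreeAssocAlg k X
  | .of x => gen k x
  | .mul a b => evalC a * evalC b - evalC b * evalC a


/-!
The free Lie algebra `Lie(X)` is spanned by the standard bracketings `[w]` of the associative
Lyndon–Shirshov words `w`: for standard `[a]`, `[b]` with `b < a`, either `[[a][b]]` is itself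
standard, or `a = u₁u₂` with `b < u₂`, and the Jacobi identity
`⁅[a], [b]⁆ = ⁅[u₁], ⁅[u₂], [b]⁆⁆ - ⁅[u₂], ⁅[u₁], [b]⁆⁆` expands it, by induction, into standard
bracketings of rearrangements of `ab` that are at most `ab`.

Deg-lex is a monomial order and `vw > wv` for the standard factorization `w = vw`, so the leading
word of `[w]` is `w`. As the standard bracketing of a word is unique, distinct standard
bracketings have distinct leading words, and the leading word of a nonzero combination of them is
the largest of those occurring, an ALSW.
-/

section WordOrders

variable {X : Type*} [LinearOrder X]

theorem LSLt.irrefl (u : List X) : ¬ LSLt u u := by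
  induction u with
  | nil => exact id
  | cons a u ih => rintro (h | ⟨-, h⟩) <;> [exact lt_irrefl a h; exact ih h]

theorem LSLt.trans {u v w : List X} (h₁ : LSLt u v) (h₂ : LSLt v w) : LSLt u w := by
  induction u generalizing v w with
  | nil => cases v <;> cases w <;> simp_all [LSLt]
  | cons a u ih =>
    match v, w, h₁, h₂ with
    | _ :: _, [], _, _ => trivial
    | _ :: _, _ :: _, .inl hab, .inl hbc => exact .inl (hab.trans hbc)
    | _ :: _, _ :: _, .inl hab, .inr ⟨rfl, _⟩ => exact .inl hab
    | _ :: _, _ :: _, .inr ⟨rfl, _⟩, .inl hbc => exact .inl hbc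
    | _ :: _, _ :: _, .inr ⟨rfl, huv⟩, .inr ⟨rfl, hvw⟩ => exact .inr ⟨rfl, ih huv hvw⟩

theorem LSLt.asymm {u v : List X} (h₁ : LSLt u v) (h₂ : LSLt v u) : False :=
  LSLt.irrefl u (h₁.trans h₂)

theorem lslt_trichotomy (u v : List X) : u = v ∨ LSLt u v ∨ LSLt v u := by
  induction u generalizing v with
  | nil => cases v <;> simp [LSLt]
  | cons a u ih =>
    cases v with
    | nil => exact .inr (.inl trivial)
    | cons b v =>
      rcases lt_trichotomy a b with h | rfl | h
      · exact .inr (.inl (.inl h))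
      · rcases ih v with rfl | h | h
        · exact .inl rfl
        · exact .inr (.inl (.inr ⟨rfl, h⟩))
        · exact .inr (.inr (.inr ⟨rfl, h⟩))
      · exact .inr (.inr (.inl h))

theorem lsle_or_lslt (u v : List X) : LSLe u v ∨ LSLt v u := by
  rcases lslt_trichotomy u v with h | h | h
  exacts [.inl (.inl h), .inl (.inr h), .inr h]

theorem append_lslt_self (s : List X) {t : List X} (ht : t ≠ []) : LSLt (s ++ t) s := by
  induction s with
  | nil => cases t with | nil => exact absurd rfl ht | cons => trivial
  | cons a s ih => exact .inr ⟨rfl, ih⟩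

theorem lslt_append_left_iff {c s t : List X} : LSLt (c ++ s) (c ++ t) ↔ LSLt s t := by
  induction c with
  | nil => rfl
  | cons a c ih => simp [LSLt, ih]

theorem LSLt.exists_eq_append_or_forall_append {A B : List X} (h : LSLt A B) :
    (∃ t, t ≠ [] ∧ A = B ++ t) ∨ ∀ x y, LSLt (A ++ x) (B ++ y) := by
  induction A generalizing B with
  | nil => cases B <;> simp_all [LSLt]
  | cons a A ih =>
    cases B with
    | nil => exact .inl ⟨a :: A, List.cons_ne_nil _ _, rfl⟩
    | cons b B =>
      rcases h with h | ⟨rfl, h⟩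
      · exact .inr fun _ _ => .inl h
      · rcases ih h with ⟨t, ht, rfl⟩ | h
        · exact .inl ⟨t, ht, rfl⟩
        · exact .inr fun x y => .inr ⟨rfl, h x y⟩

theorem LSLt.append_append_of_length_le {A B : List X} (h : LSLt A B)
    (hl : A.length ≤ B.length) (x y : List X) : LSLt (A ++ x) (B ++ y) := by
  rcases h.exists_eq_append_or_forall_append with ⟨t, ht, rfl⟩ | h
  · simp only [List.length_append] at hl
    exact absurd (List.eq_nil_of_length_eq_zero (by omega)) ht
  · exact h x y

theorem LSLt.append_right {A B : List X} (h : LSLt A B) (x : List X) : LSLt (A ++ x) B := by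
  rcases h.exists_eq_append_or_forall_append with ⟨t, ht, rfl⟩ | h
  · rw [List.append_assoc]
    exact append_lslt_self B (by simp [ht])
  · simpa using h x []

theorem LSLt.trans_le {u v w : List X} (h₁ : LSLt u v) (h₂ : LSLe v w) : LSLt u w := by
  rcases h₂ with rfl | h₂
  exacts [h₁, h₁.trans h₂]

theorem LSLe.trans_lt {u v w : List X} (h₁ : LSLe u v) (h₂ : LSLt v w) : LSLt u w := by
  rcases h₁ with rfl | h₁
  exacts [h₂, h₁.trans h₂]

theorem LSLe.trans {u v w : List X} (h₁ : LSLe u v) (h₂ : LSLe v w) : LSLe u w := by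
  rcases h₁ with rfl | h₁
  exacts [h₂, .inr (h₁.trans_le h₂)]

theorem DegLt.irrefl (u : List X) : ¬ DegLt u u := by
  rintro (h | ⟨-, h⟩)
  exacts [lt_irrefl _ h, LSLt.irrefl u h]

theorem DegLt.trans {u v w : List X} (h₁ : DegLt u v) (h₂ : DegLt v w) : DegLt u w := by
  rcases h₁ with h₁ | ⟨he₁, h₁⟩ <;> rcases h₂ with h₂ | ⟨he₂, h₂⟩
  · exact .inl (h₁.trans h₂)
  · exact .inl (he₂ ▸ h₁)
  · exact .inl (he₁ ▸ h₂)
  · exact .inr ⟨he₁.trans he₂, h₁.trans h₂⟩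

theorem degLt_trichotomy (u v : List X) : u = v ∨ DegLt u v ∨ DegLt v u := by
  rcases lt_trichotomy u.length v.length with h | h | h
  · exact .inr (.inl (.inl h))
  · rcases lslt_trichotomy u v with h' | h' | h'
    exacts [.inl h', .inr (.inl (.inr ⟨h, h'⟩)), .inr (.inr (.inr ⟨h.symm, h'⟩))]
  · exact .inr (.inr (.inl h))

theorem DegLe.trans_lt {u v w : List X} (h₁ : DegLe u v) (h₂ : DegLt v w) : DegLt u w := by
  rcases h₁ with rfl | h₁
  exacts [h₂, h₁.trans h₂]

theorem DegLe.antisymm {u v : List X} (h₁ : DegLe u v) (h₂ : DegLe v u) : u = v := by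
  rcases h₁ with rfl | h₁
  · rfl
  · exact absurd (h₂.trans_lt h₁) (DegLt.irrefl v)

theorem DegLe.length_le {u v : List X} (h : DegLe u v) : u.length ≤ v.length := by
  rcases h with rfl | h | ⟨h, -⟩ <;> omega

theorem DegLe.append {z₁ z₂ p q : List X} (h₁ : DegLe z₁ p) (h₂ : DegLe z₂ q) :
    DegLe (z₁ ++ z₂) (p ++ q) := by
  have hl₁ := h₁.length_le
  have hl₂ := h₂.length_le
  by_cases hlen : z₁.length = p.length ∧ z₂.length = q.length
  · rcases h₁ with rfl | h₁ | ⟨-, h₁⟩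
    · rcases h₂ with rfl | h₂ | ⟨-, h₂⟩
      · exact .inl rfl
      · omega
      · exact .inr (.inr ⟨by simp [hlen.2], lslt_append_left_iff.mpr h₂⟩)
    · omega
    · exact .inr (.inr ⟨by simp [hlen.1, hlen.2], h₁.append_append_of_length_le hlen.1.le _ _⟩)
  · exact .inr (.inl (by simp only [List.length_append]; omega))

end WordOrders

theorem List.exists_eq_append_of_append_eq_append {α : Type*} {a b c d : List α}
    (h : a ++ b = c ++ d) (hl : d.length ≤ b.length) : ∃ e, b = e ++ d ∧ a ++ e = c := by
  rcases List.append_eq_append_iff.mp h with ⟨e, rfl, rfl⟩ | ⟨e, rfl, rfl⟩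
  · exact ⟨e, rfl, rfl⟩
  · simp only [List.length_append] at hl
    obtain rfl : e = [] := List.eq_nil_of_length_eq_zero (by omega)
    exact ⟨[], rfl, by simp⟩

section LyndonShirshovWords

variable {X : Type*} [LinearOrder X]

theorem isALSW_singleton (x : X) : IsALSW [x] := by
  refine ⟨List.cons_ne_nil _ _, fun v w hv hw hvw => absurd (congrArg List.length hvw) ?_⟩
  have := List.length_pos_iff.mpr hv
  have := List.length_pos_iff.mpr hw
  simp only [List.length_append, List.length_singleton]
  omega

theorem IsALSW.suffix_lslt {p s : List X} (h : IsALSW (p ++ s)) (hp : p ≠ []) (hs : s ≠ []) :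
    LSLt s (p ++ s) := by
  have hrot : LSLt (s ++ p) (p ++ s) := h.2 p s hp hs rfl
  rcases lslt_trichotomy s (p ++ s) with heq | hlt | hgt
  · exact absurd (by simpa using congrArg List.length heq) hp
  · exact hlt
  exfalso
  rcases hgt.exists_eq_append_or_forall_append with ⟨t, ht, hext⟩ | hpos
  · -- `s` is a border: `p ++ s = s ++ t`, and `p < t` gives `p ++ s < t ++ s < s ++ t = p ++ s`
    have hlen : p.length = t.length := by have := congrArg List.length hext; simp at this; omega
    have hpt : LSLt p t := lslt_append_left_iff.mp (hext ▸ hrot)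
    have hts : LSLt (t ++ s) (s ++ t) := h.2 s t hs ht hext
    exact LSLt.irrefl _ ((hpt.append_append_of_length_le hlen.le s s).trans (hext ▸ hts))
  · exact (by simpa using hpos [] p : LSLt (p ++ s) (s ++ p)).asymm hrot

theorem isALSW_of_forall_suffix_lslt {u : List X} (hu : u ≠ [])
    (h : ∀ p s, u = p ++ s → p ≠ [] → s ≠ [] → LSLt s u) : IsALSW u := by
  refine ⟨hu, fun v w hv hw hvw => ?_⟩
  rcases (h v w hvw hv hw).exists_eq_append_or_forall_append with ⟨t, ht, hext⟩ | hpos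
  · have := congrArg List.length hext
    have := congrArg List.length hvw
    have := List.length_pos_iff.mpr hv
    have := List.length_pos_iff.mpr ht
    simp only [List.length_append] at *
    omega
  · simpa [← hvw] using hpos v []

theorem exists_lslt_suffix_of_not_isALSW {u : List X} (hu : u ≠ []) (h : ¬ IsALSW u) :
    ∃ p s, u = p ++ s ∧ p ≠ [] ∧ s ≠ [] ∧ LSLt u s := by
  by_contra! hc
  refine h (isALSW_of_forall_suffix_lslt hu fun p s hps hp hs => ?_)
  rcases lslt_trichotomy s u with rfl | hlt | hgt
  · exact absurd (by simpa using congrArg List.length hps) hp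
  · exact hlt
  · exact absurd hgt (hc p s hps hp hs)

theorem IsALSW.append {a b : List X} (ha : IsALSW a) (hb : IsALSW b) (hba : LSLt b a) :
    IsALSW (a ++ b) := by
  have hb_lt : LSLt b (a ++ b) := by
    rcases hba.exists_eq_append_or_forall_append with ⟨t, ht, hext⟩ | hpos
    · have hb' : IsALSW (a ++ t) := hext ▸ hb
      rw [hext]
      exact lslt_append_left_iff.mpr (hb'.suffix_lslt ha.1 ht)
    · simpa using hpos [] b
  refine isALSW_of_forall_suffix_lslt (by simp [ha.1]) fun p s hps hp hs => ?_
  rcases le_or_gt s.length b.length with hsl | hsl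
  · obtain ⟨q, rfl, -⟩ := List.exists_eq_append_of_append_eq_append hps hsl
    rcases eq_or_ne q [] with rfl | hq
    · simpa using hb_lt
    · exact (hb.suffix_lslt hq hs).trans hb_lt
  · obtain ⟨r, rfl, rfl⟩ := List.exists_eq_append_of_append_eq_append hps.symm hsl.le
    have hr : r ≠ [] := by rintro rfl; simp at hsl
    exact (ha.suffix_lslt hp hr).append_append_of_length_le (by simp) b b

theorem LongestALSWProperSuffix.lsle_of_suffix {u u₂ : List X}
    (h : LongestALSWProperSuffix u u₂) {r p : List X} (hup : u = p ++ r) (hp : p ≠ [])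
    (hr : r ≠ []) : LSLe r u₂ := by
  obtain ⟨h₂, ⟨u₁, -, hu⟩, hmax⟩ := h
  induction hn : r.length using Nat.strong_induction_on generalizing r p with
  | _ n ih =>
    rcases le_or_gt r.length u₂.length with hle | hgt
    · obtain ⟨e, rfl, -⟩ := List.exists_eq_append_of_append_eq_append (hu.symm.trans hup) hle
      rcases eq_or_ne e [] with rfl | he
      exacts [.inl rfl, .inr (h₂.suffix_lslt he hr)]
    · -- `r` is too long to be an ALSW, so it has a suffix `β` with `r < β`, and `β ≤ u₂`
      have hnot : ¬ IsALSW r := fun hr' => by have := hmax r hr' ⟨p, hp, hup⟩; omega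
      obtain ⟨α, β, rfl, hα, hβ, hlt⟩ := exists_lslt_suffix_of_not_isALSW hr hnot
      have := List.length_pos_iff.mpr hα
      have hβ_le := ih β.length (by simp at hn; omega) (p := p ++ α) (by simp [hup]) (by simp [hp])
        hβ rfl
      exact .inr (hlt.trans_le hβ_le)

theorem LongestALSWProperSuffix.append {u u₂ v : List X} (h : LongestALSWProperSuffix u u₂)
    (hv : IsALSW v) (hle : LSLe u₂ v) (hu : u ≠ []) : LongestALSWProperSuffix (u ++ v) v := by
  refine ⟨hv, ⟨u, hu, rfl⟩, fun w hw ⟨v', hv', hsplit⟩ => ?_⟩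
  by_contra! hlong
  obtain ⟨e, rfl, hue⟩ := List.exists_eq_append_of_append_eq_append hsplit.symm hlong.le
  have he : e ≠ [] := by rintro rfl; simp at hlong
  have hev : LSLe e v := (h.lsle_of_suffix hue.symm hv' he).trans hle
  exact LSLt.irrefl v
    (((hw.suffix_lslt he hv.1).trans (append_lslt_self e hv.1)).trans_le hev)

theorem LongestALSWProperSuffix.append_lslt {u₁ u₂ : List X} (hu : IsALSW (u₁ ++ u₂))
    (h : LongestALSWProperSuffix (u₁ ++ u₂) u₂) (hu₁ : u₁ ≠ []) (x y : List X) :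
    LSLt (u₂ ++ x) (u₁ ++ u₂ ++ y) := by
  have hu₂ : u₂ ≠ [] := h.1.1
  have hlt : LSLt u₂ u₁ := (hu.suffix_lslt hu₁ hu₂).trans (append_lslt_self u₁ hu₂)
  rw [List.append_assoc]
  rcases hlt.exists_eq_append_or_forall_append with ⟨t, ht, hext⟩ | hpos
  · -- the suffix `t` of `u₁ ++ u₂ = u₁ ++ u₁ ++ t` is shorter than `u₂`, so `t < u₂` positionally
    have htle : LSLe t u₂ :=
      h.lsle_of_suffix (p := u₁ ++ u₁) (by rw [hext, List.append_assoc]) (by simp [hu₁]) ht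
    have htlen : t.length < u₂.length := by
      rw [hext, List.length_append]
      exact Nat.lt_add_of_pos_left (List.length_pos_iff.mpr hu₁)
    have htlt : LSLt t u₂ := htle.resolve_left (by rintro rfl; omega)
    have hx : u₂ ++ x = u₁ ++ (t ++ x) := by rw [hext, List.append_assoc]
    rw [hx]
    exact lslt_append_left_iff.mpr (htlt.append_append_of_length_le htlen.le x y)
  · exact hpos x (u₂ ++ y)

theorem longestALSWProperSuffix_cons {x : X} {v : List X} (hv : IsALSW v) :
    LongestALSWProperSuffix (x :: v) v := by
  refine ⟨hv, ⟨[x], List.cons_ne_nil _ _, rfl⟩, fun w _ ⟨v', hv', hsplit⟩ => ?_⟩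
  have := congrArg List.length hsplit
  have := List.length_pos_iff.mpr hv'
  simp only [List.length_cons, List.length_append] at *
  omega

theorem LongestALSWProperSuffix.unique {u w w' : List X} (h : LongestALSWProperSuffix u w)
    (h' : LongestALSWProperSuffix u w') : w = w' := by
  have h₁ := h'.2.2 w h.1 h.2.1
  have h₂ := h.2.2 w' h'.1 h'.2.1
  obtain ⟨v, -, hu⟩ := h.2.1
  obtain ⟨v', -, hu'⟩ := h'.2.1
  have := congrArg List.length (hu.symm.trans hu')
  simp only [List.length_append] at this
  exact (List.append_inj (hu.symm.trans hu') (by omega)).2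

end LyndonShirshovWords

section StandardBracketing

variable {X : Type*} [LinearOrder X]

theorem IsStdBracketing.wordOf_eq {w : List X} {t : FreeMagma X} (h : IsStdBracketing w t) :
    wordOf t = w := by
  induction h with
  | of x => rfl
  | mul _ _ _ _ ih₁ ih₂ => exact congrArg₂ (· ++ ·) ih₁ ih₂

theorem IsStdBracketing.isALSW {w : List X} {t : FreeMagma X} (h : IsStdBracketing w t) :
    IsALSW w := by
  cases h with
  | of x => exact isALSW_singleton x
  | mul h _ _ _ => exact h

theorem IsStdBracketing.unique {w : List X} {t t' : FreeMagma X} (h : IsStdBracketing w t)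
    (h' : IsStdBracketing w t') : t = t' := by
  induction h generalizing t' with
  | of x =>
    generalize hw : [x] = w at h'
    cases h' with
    | of y => cases hw; rfl
    | mul _ _ hv hw₂ =>
      have := congrArg List.length hw
      have := List.length_pos_iff.mpr hv.isALSW.1
      have := List.length_pos_iff.mpr hw₂.isALSW.1
      simp only [List.length_singleton, List.length_append] at *
      omega
  | @mul v w _ _ _ hlong hv hw ihv ihw =>
    generalize hW : v ++ w = W at h'
    cases h' with
    | of y =>
      have := congrArg List.length hW
      have := List.length_pos_iff.mpr hv.isALSW.1
      have := List.length_pos_iff.mpr hw.isALSW.1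
      simp only [List.length_singleton, List.length_append] at *
      omega
    | mul _ hlong' hv' hw' =>
      obtain rfl := hlong.unique (hW ▸ hlong')
      obtain rfl := List.append_cancel_right hW
      rw [ihv hv', ihw hw']

end StandardBracketing

section LeadingWords

variable {k X : Type*} [Field k]

theorem coeffW_add (f g : FreeAssocAlg k X) (u : List X) :
    coeffW (f + g) u = coeffW f u + coeffW g u := rfl

theorem coeffW_neg (f : FreeAssocAlg k X) (u : List X) : coeffW (-f) u = -coeffW f u := rfl

theorem coeffW_smul (r : k) (f : FreeAssocAlg k X) (u : List X) :
    coeffW (r • f) u = r * coeffW f u := rfl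

theorem coeffW_monom_self (u : List X) : coeffW (monom k u) u = 1 := by
  simp [coeffW, monom]

theorem coeffW_monom_of_ne {u w : List X} (h : u ≠ w) : coeffW (monom k u) w = 0 := by
  simp [coeffW, monom, FreeMonoid.ofList.injective.ne h]

theorem evalC_mul (a b : FreeMagma X) :
    (evalC (a * b) : FreeAssocAlg k X) = ⁅(evalC a : FreeAssocAlg k X), evalC b⁆ :=
  (Ring.lie_def _ _).symm

theorem exists_append_of_coeffW_mul_ne_zero {f g : FreeAssocAlg k X} {z : List X}
    (h : coeffW (f * g) z ≠ 0) :
    ∃ z₁ z₂, z = z₁ ++ z₂ ∧ coeffW f z₁ ≠ 0 ∧ coeffW g z₂ ≠ 0 := by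
  classical
  rw [coeffW, MonoidAlgebra.coeff_mul] at h
  obtain ⟨a, ha, h⟩ := Finset.exists_ne_zero_of_sum_ne_zero h
  obtain ⟨b, hb, h⟩ := Finset.exists_ne_zero_of_sum_ne_zero h
  have hab : a * b = FreeMonoid.ofList z := by by_contra hab; exact h (if_neg hab)
  exact ⟨a.toList, b.toList, (congrArg FreeMonoid.toList hab).symm,
    Finsupp.mem_support_iff.mp ha, Finsupp.mem_support_iff.mp hb⟩

variable [LinearOrder X]

theorem coeffW_mul_append {f g : FreeAssocAlg k X} {p q : List X}
    (hf : ∀ z, coeffW f z ≠ 0 → DegLe z p) (hg : ∀ z, coeffW g z ≠ 0 → DegLe z q) :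
    coeffW (f * g) (p ++ q) = coeffW f p * coeffW g q := by
  classical
  rw [coeffW, MonoidAlgebra.coeff_mul, Finsupp.sum, Finset.sum_eq_single (FreeMonoid.ofList p)]
  · rw [Finsupp.sum, Finset.sum_eq_single (FreeMonoid.ofList q)]
    · exact if_pos rfl
    · intro b _ hbq
      exact if_neg fun hb => hbq (List.append_cancel_left (congrArg FreeMonoid.toList hb))
    · intro hq
      rw [Finsupp.notMem_support_iff.mp hq, mul_zero, ite_self]
  · intro a ha hap
    refine Finset.sum_eq_zero fun b hb => if_neg fun hab => hap ?_
    have hab : a.toList ++ b.toList = p ++ q := congrArg FreeMonoid.toList hab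
    have ha := (hf a.toList (Finsupp.mem_support_iff.mp ha)).length_le
    have hb := (hg b.toList (Finsupp.mem_support_iff.mp hb)).length_le
    have := congrArg List.length hab
    simp only [List.length_append] at this
    exact congrArg FreeMonoid.ofList (List.append_inj hab (by omega)).1
  · intro hp
    exact Finset.sum_eq_zero fun b _ => by simp [Finsupp.notMem_support_iff.mp hp]

theorem IsLeadingWord.degLe {f : FreeAssocAlg k X} {w z : List X} (h : IsLeadingWord f w)
    (hz : coeffW f z ≠ 0) : DegLe z w :=
  h.2 z hz

theorem IsLeadingWord.unique {f : FreeAssocAlg k X} {w w' : List X} (h : IsLeadingWord f w)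
    (h' : IsLeadingWord f w') : w = w' :=
  (h'.degLe h.1).antisymm (h.degLe h'.1)

theorem isLeadingWord_gen (x : X) : IsLeadingWord (gen k x) [x] := by
  refine ⟨by simp [gen, coeffW_monom_self], fun z hz => .inl ?_⟩
  by_contra hne
  exact hz (coeffW_monom_of_ne (Ne.symm hne))

theorem IsLeadingWord.smul {f : FreeAssocAlg k X} {w : List X} (h : IsLeadingWord f w) {r : k}
    (hr : r ≠ 0) : IsLeadingWord (r • f) w :=
  ⟨by simp [coeffW_smul, hr, h.1], fun z hz => h.2 z (right_ne_zero_of_mul hz)⟩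

theorem IsLeadingWord.add_of_degLt {f g : FreeAssocAlg k X} {w : List X}
    (hf : IsLeadingWord f w) (hg : ∀ z, coeffW g z ≠ 0 → DegLt z w) :
    IsLeadingWord (f + g) w := by
  have hgw : coeffW g w = 0 := by_contra fun h => DegLt.irrefl w (hg w h)
  refine ⟨by simpa [coeffW_add, hgw] using hf.1, fun z hz => ?_⟩
  by_cases hfz : coeffW f z = 0
  · exact .inr (hg z (by simpa [coeffW_add, hfz] using hz))
  · exact hf.degLe hfz

theorem IsLeadingWord.mul {f g : FreeAssocAlg k X} {p q : List X} (hf : IsLeadingWord f p)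
    (hg : IsLeadingWord g q) : IsLeadingWord (f * g) (p ++ q) := by
  refine ⟨?_, fun z hz => ?_⟩
  · rw [coeffW_mul_append hf.2 hg.2]
    exact mul_ne_zero hf.1 hg.1
  · obtain ⟨z₁, z₂, rfl, h₁, h₂⟩ := exists_append_of_coeffW_mul_ne_zero hz
    exact (hf.degLe h₁).append (hg.degLe h₂)

theorem isLeadingWord_evalC {w : List X} {t : FreeMagma X} (h : IsStdBracketing w t) :
    IsLeadingWord (evalC t : FreeAssocAlg k X) w := by
  induction h with
  | of x => exact isLeadingWord_gen x
  | @mul v w _ _ hvw _ hv hw ihv ihw =>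
    have hrot : DegLt (w ++ v) (v ++ w) :=
      .inr ⟨by simp [Nat.add_comm], hvw.2 v w hv.isALSW.1 hw.isALSW.1 rfl⟩
    rw [evalC_mul, Ring.lie_def, sub_eq_add_neg]
    refine (ihv.mul ihw).add_of_degLt fun z hz => ?_
    rw [coeffW_neg, neg_ne_zero] at hz
    exact ((ihw.mul ihv).degLe hz).trans_lt hrot

end LeadingWords

section LeadingWordsOfSpans

variable {k X : Type*} [Field k] [LinearOrder X]

theorem exists_isLeadingWord_sum {ι : Type*} {s : Finset ι} (hs : s.Nonempty) {c : ι → k}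
    (hc : ∀ i ∈ s, c i ≠ 0) {P : ι → FreeAssocAlg k X} {lw : ι → List X}
    (hP : ∀ i ∈ s, IsLeadingWord (P i) (lw i)) (hinj : Set.InjOn lw s) :
    ∃ i ∈ s, IsLeadingWord (∑ j ∈ s, c j • P j) (lw i) := by
  induction hs using Finset.Nonempty.cons_induction with
  | singleton i => exact ⟨i, by simp, by simpa using (hP i (by simp)).smul (hc i (by simp))⟩
  | cons i s hi hs ih =>
    simp only [Finset.mem_cons, forall_eq_or_imp, Finset.coe_cons] at hc hP hinj
    obtain ⟨j, hj, hsum⟩ := ih hc.2 hP.2 (hinj.mono (Set.subset_insert _ _))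
    have hij : lw i ≠ lw j := fun h => hi (hinj (by simp) (by simp [hj]) h ▸ hj)
    have hPi := hP.1.smul hc.1
    rw [Finset.sum_cons]
    rcases (degLt_trichotomy (lw i) (lw j)).resolve_left hij with hlt | hgt
    · rw [add_comm]
      exact ⟨j, by simp [hj], hsum.add_of_degLt fun z hz => (hPi.degLe hz).trans_lt hlt⟩
    · exact ⟨i, by simp, hPi.add_of_degLt fun z hz => (hsum.degLe hz).trans_lt hgt⟩

theorem IsLeadingWord.exists_eq_of_mem_span {ι : Type*} {v : ι → FreeAssocAlg k X} {s : Set ι}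
    {lw : ι → List X} (hv : ∀ i ∈ s, IsLeadingWord (v i) (lw i)) (hinj : Set.InjOn lw s)
    {f : FreeAssocAlg k X} (hf : f ∈ Submodule.span k (v '' s)) {u : List X}
    (hu : IsLeadingWord f u) : ∃ i ∈ s, lw i = u := by
  obtain ⟨l, hl, rfl⟩ := Finsupp.mem_span_image_iff_linearCombination k |>.mp hf
  rw [Finsupp.mem_supported] at hl
  rw [Finsupp.linearCombination_apply, Finsupp.sum] at hu
  have hne : l.support.Nonempty := by
    by_contra! h
    exact hu.1 (by simp [h, coeffW])
  obtain ⟨i, hi, hlead⟩ := exists_isLeadingWord_sum hne (fun i hi => Finsupp.mem_support_iff.mp hi)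
    (fun i hi => hv i (hl hi)) (hinj.mono hl)
  exact ⟨i, hl hi, hlead.unique hu⟩

end LeadingWordsOfSpans

section LieSpans

variable {k L : Type*} [CommRing k] [LieRing L] [LieAlgebra k L] {x y : L} {S T : Set L}

theorem lie_mem_span_of_forall_mem (h : ∀ g ∈ S, ⁅x, g⁆ ∈ Submodule.span k T)
    (hy : y ∈ Submodule.span k S) : ⁅x, y⁆ ∈ Submodule.span k T :=
  (Submodule.span_le (p := (Submodule.span k T).comap (LieModule.toEnd k L L x))).mpr h hy

theorem lie_mem_span_of_forall_mem_of_mem (h : ∀ g ∈ S, ∀ g' ∈ S, ⁅g, g'⁆ ∈ Submodule.span k T)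
    (hx : x ∈ Submodule.span k S) (hy : y ∈ Submodule.span k S) : ⁅x, y⁆ ∈ Submodule.span k T := by
  refine lie_mem_span_of_forall_mem (fun g' hg' => ?_) hy
  rw [← lie_skew]
  exact neg_mem (lie_mem_span_of_forall_mem (fun g hg => h g' hg' g hg) hx)

end LieSpans

section StandardSpans

variable {X : Type*} [LinearOrder X]

variable (X) in
def stdBracketings : Set (FreeMagma X) :=
  {t | IsStdBracketing (wordOf t) t}

def stdBracketingsBelow (c : List X) : Set (FreeMagma X) :=
  {t | IsStdBracketing (wordOf t) t ∧ (wordOf t).Perm c ∧ LSLe (wordOf t) c}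

theorem stdBracketingsBelow_subset (c : List X) : stdBracketingsBelow c ⊆ stdBracketings X :=
  fun _ ht => ht.1

theorem mem_stdBracketingsBelow {w c : List X} {t : FreeMagma X} (h : IsStdBracketing w t)
    (hperm : w.Perm c) (hle : LSLe w c) : t ∈ stdBracketingsBelow c := by
  rw [← h.wordOf_eq] at hperm hle
  exact ⟨h.wordOf_eq ▸ h, hperm, hle⟩

theorem stdBracketingsBelow_mono {c c' : List X} (hperm : c'.Perm c) (hle : LSLe c' c) :
    stdBracketingsBelow c' ⊆ stdBracketingsBelow c :=
  fun _ ⟨ht, htperm, htle⟩ => ⟨ht, htperm.trans hperm, htle.trans hle⟩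

noncomputable def permLtCard (c : List X) : ℕ :=
  Set.ncard {z : List X | z.Perm c ∧ LSLt z c}

theorem permLtCard_lt {c c' : List X} (hperm : c'.Perm c) (hlt : LSLt c' c) :
    permLtCard c' < permLtCard c := by
  refine Set.ncard_lt_ncard ⟨fun z hz => ⟨hz.1.trans hperm, hz.2.trans hlt⟩, fun hsub => ?_⟩
    ((List.finite_toSet c.permutations).subset fun z hz => List.mem_permutations.mpr hz.1)
  exact LSLt.irrefl c' (hsub ⟨hperm, hlt⟩).2

/-- Expanding `⁅[a], [b]⁆` by the Jacobi identity either shortens the word `a ++ b`, replaces it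
by a smaller rearrangement, or keeps it and shortens the left factor `a`. -/
noncomputable def bracketMeasure (a b : List X) : ℕ ×ₗ ℕ ×ₗ ℕ :=
  toLex ((a ++ b).length, toLex (permLtCard (a ++ b), a.length))

theorem bracketMeasure_lt_of_length_lt {a b a' b' : List X}
    (h : (a' ++ b').length < (a ++ b).length) : bracketMeasure a' b' < bracketMeasure a b :=
  Prod.Lex.toLex_lt_toLex.mpr (.inl h)

theorem bracketMeasure_lt_of_perm_of_lslt {a b a' b' : List X} (hperm : (a' ++ b').Perm (a ++ b))
    (hlt : LSLt (a' ++ b') (a ++ b)) : bracketMeasure a' b' < bracketMeasure a b :=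
  Prod.Lex.toLex_lt_toLex.mpr
    (.inr ⟨hperm.length_eq, Prod.Lex.toLex_lt_toLex.mpr (.inl (permLtCard_lt hperm hlt))⟩)

theorem bracketMeasure_lt_of_eq_of_length_lt {a b a' b' : List X} (h : a' ++ b' = a ++ b)
    (hlt : a'.length < a.length) : bracketMeasure a' b' < bracketMeasure a b :=
  Prod.Lex.toLex_lt_toLex.mpr
    (.inr ⟨by rw [h], Prod.Lex.toLex_lt_toLex.mpr (.inr ⟨by rw [h], hlt⟩)⟩)

variable (k : Type*) [Field k]

noncomputable def stdSpan (X : Type*) [LinearOrder X] : Submodule k (FreeAssocAlg k X) :=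
  Submodule.span k (evalC '' stdBracketings X)

noncomputable def stdSpanBelow (c : List X) : Submodule k (FreeAssocAlg k X) :=
  Submodule.span k (evalC '' stdBracketingsBelow c)

theorem stdSpanBelow_le_stdSpan (c : List X) : stdSpanBelow k c ≤ stdSpan k X :=
  Submodule.span_mono (Set.image_mono (stdBracketingsBelow_subset c))

end StandardSpans

section BracketExpansion

variable (k : Type*) [Field k] {X : Type*} [LinearOrder X]

def BracketExpands (a b : List X) : Prop :=
  ∀ ⦃ta tb : FreeMagma X⦄, IsStdBracketing a ta → IsStdBracketing b tb → LSLt b a →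
    ⁅(evalC ta : FreeAssocAlg k X), evalC tb⁆ ∈ stdSpanBelow k (a ++ b)

variable {k}

theorem BracketExpands.lie_mem_of_perm_of_lsle {a b c : List X} (h : BracketExpands k a b)
    {ta tb : FreeMagma X} (ha : IsStdBracketing a ta) (hb : IsStdBracketing b tb)
    (hba : LSLt b a) (hperm : (a ++ b).Perm c) (hle : LSLe (a ++ b) c) :
    ⁅(evalC ta : FreeAssocAlg k X), evalC tb⁆ ∈ stdSpanBelow k c :=
  Submodule.span_mono (Set.image_mono (stdBracketingsBelow_mono hperm hle)) (h ha hb hba)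

theorem lie_lie_right_factor_mem_stdSpanBelow {u₁ u₂ b : List X} {t₁ t₂ tb : FreeMagma X}
    (hu : IsALSW (u₁ ++ u₂)) (h₁ : IsStdBracketing u₁ t₁) (h₂ : IsStdBracketing u₂ t₂)
    (hb : IsStdBracketing b tb) (hbu₂ : LSLt b u₂)
    (IH : ∀ a' b' : List X, bracketMeasure a' b' < bracketMeasure (u₁ ++ u₂) b →
      BracketExpands k a' b') :
    ⁅(evalC t₁ : FreeAssocAlg k X), ⁅(evalC t₂ : FreeAssocAlg k X), evalC tb⁆⁆ ∈
      stdSpanBelow k (u₁ ++ u₂ ++ b) := by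
  have hu₁_pos := List.length_pos_iff.mpr h₁.isALSW.1
  have hu₂_pos := List.length_pos_iff.mpr h₂.isALSW.1
  have hu₂u₁ : LSLt u₂ u₁ :=
    (hu.suffix_lslt h₁.isALSW.1 h₂.isALSW.1).trans (append_lslt_self u₁ h₂.isALSW.1)
  have hinner := IH u₂ b (bracketMeasure_lt_of_length_lt (by simp; omega)) h₂ hb hbu₂
  refine lie_mem_span_of_forall_mem ?_ hinner
  rintro _ ⟨t, ⟨ht, hperm, hle⟩, rfl⟩
  have hperm' : (u₁ ++ wordOf t).Perm (u₁ ++ u₂ ++ b) := by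
    rw [List.append_assoc]
    exact hperm.append_left u₁
  have hle' : LSLe (u₁ ++ wordOf t) (u₁ ++ u₂ ++ b) := by
    rw [List.append_assoc]
    rcases hle with heq | hlt
    exacts [.inl (by rw [heq]), .inr (lslt_append_left_iff.mpr hlt)]
  have hmeasure : bracketMeasure u₁ (wordOf t) < bracketMeasure (u₁ ++ u₂) b := by
    rcases hle' with heq | hlt
    · exact bracketMeasure_lt_of_eq_of_length_lt heq (by simp; omega)
    · exact bracketMeasure_lt_of_perm_of_lslt hperm' hlt
  exact (IH _ _ hmeasure).lie_mem_of_perm_of_lsle h₁ ht (hle.trans_lt (hu₂u₁.append_right b))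
    hperm' hle'

theorem lie_lie_left_factor_mem_stdSpanBelow {u₁ u₂ b : List X} {t₁ t₂ tb : FreeMagma X}
    (hu : IsALSW (u₁ ++ u₂)) (hlong : LongestALSWProperSuffix (u₁ ++ u₂) u₂)
    (h₁ : IsStdBracketing u₁ t₁) (h₂ : IsStdBracketing u₂ t₂)
    (hb : IsStdBracketing b tb) (hbu₂ : LSLt b u₂)
    (IH : ∀ a' b' : List X, bracketMeasure a' b' < bracketMeasure (u₁ ++ u₂) b →
      BracketExpands k a' b') :
    ⁅(evalC t₂ : FreeAssocAlg k X), ⁅(evalC t₁ : FreeAssocAlg k X), evalC tb⁆⁆ ∈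
      stdSpanBelow k (u₁ ++ u₂ ++ b) := by
  have hu₁_pos := List.length_pos_iff.mpr h₁.isALSW.1
  have hu₂_pos := List.length_pos_iff.mpr h₂.isALSW.1
  have hbu₁ : LSLt b u₁ :=
    (hbu₂.trans (hu.suffix_lslt h₁.isALSW.1 h₂.isALSW.1)).trans (append_lslt_self u₁ h₂.isALSW.1)
  have hinner := IH u₁ b (bracketMeasure_lt_of_length_lt (by simp; omega)) h₁ hb hbu₁
  refine lie_mem_span_of_forall_mem ?_ hinner
  rintro _ ⟨t, ⟨ht, hperm, hle⟩, rfl⟩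
  rcases lslt_trichotomy (wordOf t) u₂ with heq | hlt | hgt
  · rw [(show IsStdBracketing u₂ t from heq ▸ ht).unique h₂, lie_self]
    exact zero_mem _
  · have hperm' : (u₂ ++ wordOf t).Perm (u₁ ++ u₂ ++ b) :=
      (hperm.append_left u₂).trans (by simpa using List.perm_append_comm_assoc u₂ u₁ b)
    have hlt' := hlong.append_lslt hu h₁.isALSW.1 (wordOf t) b
    exact (IH _ _ (bracketMeasure_lt_of_perm_of_lslt hperm' hlt')).lie_mem_of_perm_of_lsle
      h₂ ht hlt hperm' (.inr hlt')
  · have hperm' : (wordOf t ++ u₂).Perm (u₁ ++ u₂ ++ b) :=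
      (hperm.append_right u₂).trans
        (by simpa using (List.perm_append_comm (l₁ := b) (l₂ := u₂)).append_left u₁)
    have hrot : LSLt (u₁ ++ b ++ u₂) (u₁ ++ u₂ ++ b) := by
      simp only [List.append_assoc]
      exact lslt_append_left_iff.mpr
        ((h₂.isALSW.append hb.isALSW hbu₂).2 u₂ b h₂.isALSW.1 hb.isALSW.1 rfl)
    have hlt' : LSLt (wordOf t ++ u₂) (u₁ ++ u₂ ++ b) := by
      rcases hle with heq | hlt
      · rwa [heq]
      · exact (hlt.append_append_of_length_le hperm.length_eq.le u₂ u₂).trans hrot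
    have hexp := IH _ _ (bracketMeasure_lt_of_perm_of_lslt hperm' hlt')
    rw [← lie_skew]
    exact neg_mem (hexp.lie_mem_of_perm_of_lsle ht h₂ hgt hperm' (.inr hlt'))

theorem bracketExpands_of_forall_lt {a b : List X}
    (IH : ∀ a' b' : List X, bracketMeasure a' b' < bracketMeasure a b → BracketExpands k a' b') :
    BracketExpands k a b := by
  intro ta tb ha hb hba
  have hstd : ∀ {t}, IsStdBracketing (a ++ b) t → (evalC t : FreeAssocAlg k X) ∈
      stdSpanBelow k (a ++ b) := fun h =>
    Submodule.subset_span ⟨_, mem_stdBracketingsBelow h (.refl _) (.inl rfl), rfl⟩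
  cases ha with
  | of x =>
    rw [← evalC_mul]
    exact hstd (.mul ((isALSW_singleton x).append hb.isALSW hba)
      (longestALSWProperSuffix_cons hb.isALSW) (.of x) hb)
  | @mul u₁ u₂ t₁ t₂ hu hlong h₁ h₂ =>
    rcases lsle_or_lslt u₂ b with hle | hlt
    · rw [← evalC_mul]
      exact hstd (.mul (hu.append hb.isALSW hba)
        (hlong.append hb.isALSW hle (by simp [h₁.isALSW.1])) (.mul hu hlong h₁ h₂) hb)
    · rw [evalC_mul, lie_lie]
      exact sub_mem (lie_lie_right_factor_mem_stdSpanBelow hu h₁ h₂ hb hlt IH)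
        (lie_lie_left_factor_mem_stdSpanBelow hu hlong h₁ h₂ hb hlt IH)

theorem bracketExpands (a b : List X) : BracketExpands k a b := by
  induction hm : bracketMeasure a b using WellFoundedLT.induction generalizing a b with
  | _ m ih => exact bracketExpands_of_forall_lt fun a' b' h => ih _ (hm ▸ h) a' b' rfl

end BracketExpansion

section FreeLieAlgebra

variable {k X : Type*} [Field k] [LinearOrder X]

theorem injOn_wordOf_stdBracketings : Set.InjOn wordOf (stdBracketings X) :=
  fun _ hs _ ht h => hs.unique (h ▸ ht)

theorem lie_evalC_mem_stdSpan {s t : FreeMagma X} (hs : s ∈ stdBracketings X)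
    (ht : t ∈ stdBracketings X) :
    ⁅(evalC s : FreeAssocAlg k X), evalC t⁆ ∈ stdSpan k X := by
  rcases lslt_trichotomy (wordOf t) (wordOf s) with heq | hlt | hgt
  · rw [injOn_wordOf_stdBracketings ht hs heq, lie_self]
    exact zero_mem _
  · exact stdSpanBelow_le_stdSpan k _ (bracketExpands _ _ hs ht hlt)
  · rw [← lie_skew]
    exact neg_mem (stdSpanBelow_le_stdSpan k _ (bracketExpands _ _ ht hs hgt))

theorem mem_stdSpan_of_mem_lieX {f : FreeAssocAlg k X} (hf : f ∈ LieX k X) :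
    f ∈ stdSpan k X := by
  let L : LieSubalgebra k (FreeAssocAlg k X) :=
    { stdSpan k X with
      lie_mem' := lie_mem_span_of_forall_mem_of_mem <| by
        rintro _ ⟨s, hs, rfl⟩ _ ⟨t, ht, rfl⟩
        exact lie_evalC_mem_stdSpan hs ht }
  refine (LieSubalgebra.lieSpan_le (K := L)).mpr ?_ hf
  rintro _ ⟨x, rfl⟩
  exact Submodule.subset_span ⟨.of x, .of x, rfl⟩

end FreeLieAlgebra

theorem leading_word_of_lie_element_is_alsw_general {k X : Type*} [Field k] [LinearOrder X]
    (f : FreeAssocAlg k X) (hf : f ∈ LieX k X)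
    (u : List X) (hu : IsLeadingWord f u) :
    IsALSW u := by
  obtain ⟨t, ht, rfl⟩ := hu.exists_eq_of_mem_span (fun t ht => isLeadingWord_evalC ht)
    injOn_wordOf_stdBracketings (mem_stdSpan_of_mem_lieX hf)
  exact ht.isALSW

/-- For any nonzero Lie element `f ∈ Lie(X) ⊆ k⟨X⟩`, the
leading word of `f` in the deg-lex order is an ALSW. -/
theorem leading_word_of_lie_element_is_alsw {k X : Type*} [Field k] [LinearOrder X]
    (f : FreeAssocAlg k X) (hf : f ∈ LieX k X) (hf0 : f ≠ 0)
    (u : List X) (hu : IsLeadingWord f u) :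
    IsALSW u :=
  leading_word_of_lie_element_is_alsw_general f hf u hu
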